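/- If w ∈ W_∞ is increasing up to k and not k-Grassmannian, with last descent r > k and s maximal such that w_s < w_r, then every element of Φ(w) is again increasing up to k. -/

import Mathlib

open Equiv

attribute [local instance] Classical.propDecidable

noncomputable section

namespace Giambelli

/-- The simple reflection `s_i` of the (infinite) hyperoctahedral group, realized
inside `Equiv.Perm ℤ`: `s_0` is the sign change of the first entry, and `s_i`
(`i ≥ 1`) swaps the entries in positions `i` and `i+1`. -/
def wS (i : ℕ) : Equiv.Perm ℤ :=
  if i = 0 then Equiv.swap 1 (-1)
  else Equiv.swap (i : ℤ) ((i : ℤ) + 1) * Equiv.swap (-(i : ℤ)) (-((i : ℤ) + 1))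

/-- `f` is a signed permutation: `f(-i) = -f(i)`. -/
def IsOddPerm (f : Equiv.Perm ℤ) : Prop := ∀ i : ℤ, f (-i) = - f i

/-- `f` moves only entries of absolute value at most `n`. -/
def SuppLe (n : ℕ) (f : Equiv.Perm ℤ) : Prop := ∀ i : ℤ, (n : ℤ) < |i| → f i = i

/-- Membership in the hyperoctahedral group `W_n`. -/
def InWn (n : ℕ) (f : Equiv.Perm ℤ) : Prop := IsOddPerm f ∧ SuppLe n f

/-- Membership in `W_∞ = ∪_n W_n`. -/
def InWinf (f : Equiv.Perm ℤ) : Prop := IsOddPerm f ∧ ∃ n : ℕ, SuppLe n f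

/-- The Coxeter length: the least length of a word in the `s_i` representing `f`. -/
def len (f : Equiv.Perm ℤ) : ℕ :=
  sInf {m : ℕ | ∃ l : List ℕ, l.length = m ∧ (l.map wS).prod = f}

/-- `f` has a descent at position `p ≥ 0`, where by convention `w_0 = 0`. -/
def Descent (f : Equiv.Perm ℤ) (p : ℕ) : Prop :=
  f ((p : ℤ) + 1) < (if p = 0 then 0 else f (p : ℤ))

/-- `f` is increasing up to `k`: it has no descent at any position `< k`. -/
def IncUpTo (k : ℕ) (f : Equiv.Perm ℤ) : Prop := ∀ p : ℕ, p < k → ¬ Descent f p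

/-- `f` is `k`-Grassmannian: `ℓ(f s_i) = ℓ(f) + 1` for all `i ≠ k`. -/
def kGrass (k : ℕ) (f : Equiv.Perm ℤ) : Prop :=
  ∀ i : ℕ, i ≠ k → len (f * wS i) = len f + 1

/-- The reflection `t_{ij}`, swapping the entries in positions `i` and `j`. -/
def tt (i j : ℕ) : Equiv.Perm ℤ :=
  Equiv.swap (i : ℤ) (j : ℤ) * Equiv.swap (-(i : ℤ)) (-(j : ℤ))

/-- The reflection `t̄_{ij}`, swapping and negating the entries in positions `i`,`j`
    (negating the entry in position `i` when `i = j`). -/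
def tb (i j : ℕ) : Equiv.Perm ℤ :=
  if i = j then Equiv.swap (i : ℤ) (-(i : ℤ))
  else Equiv.swap (i : ℤ) (-(j : ℤ)) * Equiv.swap (j : ℤ) (-(i : ℤ))

/-- The transition set `Φ(w) = Φ₁(w) ∪ Φ₂(w)` attached to `w` with last descent `r`
and `s` maximal such that `w_s < w_r`. -/
def Phi (w : Equiv.Perm ℤ) (r s : ℕ) : Set (Equiv.Perm ℤ) :=
  {v | ∃ i : ℕ, 1 ≤ i ∧ i < r ∧ len (w * tt r s * tt i r) = len w ∧ v = w * tt r s * tt i r} ∪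
  {v | ∃ i : ℕ, 1 ≤ i ∧ len (w * tt r s * tb i r) = len w ∧ v = w * tt r s * tb i r}

/-- The last descent position of `f`. -/
def lastDescent (f : Equiv.Perm ℤ) : ℕ := sSup {p : ℕ | Descent f p}

/-- `max { i > r | w_i < w_r }`. -/
def maxS (f : Equiv.Perm ℤ) (r : ℕ) : ℕ := sSup {i : ℕ | r < i ∧ f (i : ℤ) < f (r : ℤ)}

/-- A terminal node of the `k`-transition tree: `w = 1` or the last descent of `w` is `k`. -/
def Terminal (k : ℕ) (w : Equiv.Perm ℤ) : Prop := w = 1 ∨ lastDescent w = k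

/-- The edge (parent-to-child) relation of the `k`-transition tree `T^k`. -/
def StepT (k : ℕ) (w v : Equiv.Perm ℤ) : Prop :=
  ¬ Terminal k w ∧ v ∈ Phi w (lastDescent w) (maxS w (lastDescent w))

/-!
Put `u = w t_{rs}`. Lengths are type-B inversion numbers, and for an involution `π` the
inversions of `u π` correspond bijectively to `Inv(u) ∆ Inv(π)`, so `ℓ(u π) - ℓ(u)` is a sum of
signs `±1` over the inversions of `π`. For `π = t_{rs}` everything cancels except the pair
`(r, s)`, because `w` increases after `r` and `w_s < w_r`; hence `ℓ(u) = ℓ(w) - 1`, and each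
`v = u t` in `Φ(w)` has `ℓ(v) = ℓ(u) + 1`. Up to position `k`, `v` agrees with `u`, hence with
`w`, except at `i` when `i ≤ k`, where `v_i` is `u_r` (for `t_{ir}`) or `-u_r` (for `t̄_{ir}`).
As `0 < u_1 < ⋯ < u_k`, a sign sum equal to `1` forces `u_{i-1} < v_i < u_{i+1}`: otherwise
too many of the pairs flipped by `t` are inversions of `u`, or too few.
-/

open scoped symmDiff

lemma IsOddPerm.map_zero {f : Perm ℤ} (hf : IsOddPerm f) : f 0 = 0 := by
  have h := hf 0
  simp only [neg_zero] at h
  omega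

lemma IsOddPerm.mul {f g : Perm ℤ} (hf : IsOddPerm f) (hg : IsOddPerm g) : IsOddPerm (f * g) :=
  fun i => by simp only [Perm.mul_apply, hg i, hf (g i)]

lemma SuppLe.mono {m n : ℕ} {f : Perm ℤ} (hf : SuppLe m f) (h : m ≤ n) : SuppLe n f :=
  fun i hi => hf i (lt_of_le_of_lt (by exact_mod_cast h) hi)

lemma SuppLe.mul {n : ℕ} {f g : Perm ℤ} (hf : SuppLe n f) (hg : SuppLe n g) :
    SuppLe n (f * g) :=
  fun i hi => by simp only [Perm.mul_apply, hg i hi, hf i hi]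

lemma SuppLe.abs_apply_le {n : ℕ} {f : Perm ℤ} (hf : SuppLe n f) {x : ℤ} (hx : |x| ≤ n) :
    |f x| ≤ n := by
  by_contra! h
  have hfx : f x = x := f.injective (hf (f x) h)
  rw [hfx] at h
  omega

lemma InWinf.mul {f g : Perm ℤ} (hf : InWinf f) (hg : InWinf g) : InWinf (f * g) := by
  obtain ⟨hfo, m, hm⟩ := hf
  obtain ⟨hgo, n, hn⟩ := hg
  exact ⟨hfo.mul hgo, max m n, (hm.mono (le_max_left _ _)).mul (hn.mono (le_max_right _ _))⟩

/-- The pairs `(x, y)` indexing type-B inversions: with `f y < f x`, a pair with `0 < x` is an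
ordinary inversion, `x = -y` records `f y < 0`, and `-y < x < 0` records `f y + f (-x) < 0`. -/
def IsTypeBPair (p : ℤ × ℤ) : Prop := 0 < p.2 ∧ -p.2 ≤ p.1 ∧ p.1 < p.2 ∧ p.1 ≠ 0

def invSet (f : Perm ℤ) : Set (ℤ × ℤ) := {p | IsTypeBPair p ∧ f p.2 < f p.1}

def ninv (f : Perm ℤ) : ℕ := (invSet f).ncard

lemma SuppLe.invSet_subset {n : ℕ} {f : Perm ℤ} (hf : SuppLe n f) :
    invSet f ⊆ Set.Icc (-(n : ℤ)) n ×ˢ Set.Icc 1 (n : ℤ) := by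
  rintro ⟨x, y⟩ ⟨⟨hy, hxy, hxy', -⟩, hflip : f y < f x⟩
  have hyn : y ≤ n := by
    by_contra! hyn
    have hfy : f y = y := hf y (by rw [abs_of_pos hy]; omega)
    rcases le_or_gt |x| (n : ℤ) with h | h
    · have := abs_le.1 (hf.abs_apply_le h)
      omega
    · have := hf x h
      omega
  simp only [Set.mem_prod, Set.mem_Icc]
  omega

lemma InWinf.invSet_finite {f : Perm ℤ} (hf : InWinf f) : (invSet f).Finite := by
  obtain ⟨-, n, hn⟩ := hf
  exact ((Set.finite_Icc _ _).prod (Set.finite_Icc _ _)).subset hn.invSet_subset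

/-- The representative satisfying `IsTypeBPair` of `{a, b}` up to order and a common sign. -/
def normPair (a b : ℤ) : ℤ × ℤ :=
  if 0 ≤ a + b then (min a b, max a b) else (-max a b, -min a b)

lemma normPair_cases (a b : ℤ) :
    normPair a b = (a, b) ∨ normPair a b = (b, a) ∨ normPair a b = (-a, -b) ∨
      normPair a b = (-b, -a) := by
  unfold normPair
  split_ifs <;> simp only [Int.min_def, Int.max_def] <;> split_ifs <;> simp

lemma normPair_comm (a b : ℤ) : normPair a b = normPair b a := by
  simp only [normPair, min_comm, max_comm, add_comm]

lemma normPair_neg (a b : ℤ) : normPair (-a) (-b) = normPair a b := by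
  unfold normPair
  simp only [Int.min_def, Int.max_def, Prod.ext_iff]
  split_ifs <;> omega

lemma IsTypeBPair.normPair_eq {p : ℤ × ℤ} (hp : IsTypeBPair p) : normPair p.1 p.2 = p := by
  obtain ⟨h1, h2, h3, -⟩ := hp
  simp only [normPair, Int.min_def, Int.max_def, Prod.ext_iff]
  split_ifs <;> omega

lemma isTypeBPair_normPair {a b : ℤ} (hab : a ≠ b) (ha : a ≠ 0) (hb : b ≠ 0) :
    IsTypeBPair (normPair a b) := by
  simp only [IsTypeBPair, normPair, Int.min_def, Int.max_def]
  split_ifs <;> omega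

def Reverses (f : Perm ℤ) (a b : ℤ) : Prop := (a < b ↔ f b < f a)

lemma reverses_comm (f : Perm ℤ) {a b : ℤ} (hab : a ≠ b) : Reverses f b a ↔ Reverses f a b := by
  have : f a ≠ f b := f.injective.ne hab
  unfold Reverses
  omega

lemma IsOddPerm.reverses_neg {f : Perm ℤ} (hf : IsOddPerm f) (a b : ℤ) :
    Reverses f (-a) (-b) ↔ Reverses f b a := by
  simp only [Reverses, hf a, hf b]
  omega

lemma IsOddPerm.reverses_normPair {f : Perm ℤ} (hf : IsOddPerm f) {a b : ℤ} (hab : a ≠ b) :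
    Reverses f (normPair a b).1 (normPair a b).2 ↔ Reverses f a b := by
  rcases normPair_cases a b with h | h | h | h <;> simp only [h]
  · exact reverses_comm f hab
  · exact (hf.reverses_neg a b).trans (reverses_comm f hab)
  · exact hf.reverses_neg b a

lemma reverses_mul (f g : Perm ℤ) {a b : ℤ} (hab : a ≠ b) :
    Reverses (f * g) a b ↔ ¬ (Reverses f (g a) (g b) ↔ Reverses g a b) := by
  have h1 : g a ≠ g b := g.injective.ne hab
  have h2 : f (g a) ≠ f (g b) := f.injective.ne h1
  simp only [Reverses, Perm.mul_apply]
  omega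

lemma reverses_apply_of_involutive {π : Perm ℤ} (hπ : Function.Involutive π) {a b : ℤ}
    (hab : a ≠ b) : Reverses π (π a) (π b) ↔ Reverses π a b := by
  have : π a ≠ π b := π.injective.ne hab
  simp only [Reverses, hπ a, hπ b]
  omega

lemma IsTypeBPair.mem_invSet_iff {p : ℤ × ℤ} (hp : IsTypeBPair p) (f : Perm ℤ) :
    p ∈ invSet f ↔ Reverses f p.1 p.2 := by
  change (IsTypeBPair p ∧ _) ↔ (_ ↔ _)
  simp only [hp, hp.2.2.1, true_and, true_iff]

lemma ncard_symmDiff_add_two_mul_ncard_inter {α : Type*} {s t : Set α} (hs : s.Finite)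
    (ht : t.Finite) : (s ∆ t).ncard + 2 * (s ∩ t).ncard = s.ncard + t.ncard := by
  rw [Set.symmDiff_def, Set.ncard_union_eq disjoint_sdiff_sdiff hs.sdiff ht.sdiff]
  have hs' := Set.ncard_inter_add_ncard_sdiff_eq_ncard s t hs
  have ht' := Set.ncard_inter_add_ncard_sdiff_eq_ncard t s ht
  rw [Set.inter_comm] at ht'
  omega

/-- For an involution `π`, the pair map `p ↦ normPair (π p.1) (π p.2)` is an involution of the
type-B pairs carrying the inversions of `u * π` onto `invSet u ∆ invSet π`. -/
theorem ninv_mul_add_two_mul_ncard_inter {u π : Perm ℤ} (hu : InWinf u) (hπ : InWinf π)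
    (hπ2 : Function.Involutive π) :
    ninv (u * π) + 2 * (invSet u ∩ invSet π).ncard = ninv u + ninv π := by
  set Θ : ℤ × ℤ → ℤ × ℤ := fun p => normPair (π p.1) (π p.2) with hΘ
  have hne : ∀ p, IsTypeBPair p → π p.1 ≠ π p.2 ∧ π p.1 ≠ 0 ∧ π p.2 ≠ 0 := by
    rintro p ⟨h1, h2, h3, h4⟩
    rw [← hπ.1.map_zero]
    exact ⟨π.injective.ne (by omega), π.injective.ne h4, π.injective.ne (by omega)⟩
  have hΘpair : ∀ p, IsTypeBPair p → IsTypeBPair (Θ p) := fun p hp =>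
    isTypeBPair_normPair (hne p hp).1 (hne p hp).2.1 (hne p hp).2.2
  have hΘΘ : ∀ p, IsTypeBPair p → Θ (Θ p) = p := by
    intro p hp
    rcases normPair_cases (π p.1) (π p.2) with h | h | h | h <;>
      simp only [hΘ, h, hπ.1 _, hπ2 _, normPair_neg]
    all_goals first | exact hp.normPair_eq | rw [normPair_comm]; exact hp.normPair_eq
  have hmem : ∀ p, IsTypeBPair p → (p ∈ invSet (u * π) ↔ Θ p ∈ invSet u ∆ invSet π) := by
    intro p hp
    have hΘu : Θ p ∈ invSet u ↔ Reverses u (π p.1) (π p.2) :=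
      ((hΘpair p hp).mem_invSet_iff u).trans (hu.1.reverses_normPair (hne p hp).1)
    have hΘπ : Θ p ∈ invSet π ↔ Reverses π p.1 p.2 :=
      ((hΘpair p hp).mem_invSet_iff π).trans <| (hπ.1.reverses_normPair (hne p hp).1).trans
        (reverses_apply_of_involutive hπ2 hp.2.2.1.ne)
    rw [hp.mem_invSet_iff, reverses_mul u π hp.2.2.1.ne, Set.mem_symmDiff, hΘu, hΘπ]
    tauto
  have hpair : ∀ q ∈ invSet u ∆ invSet π, IsTypeBPair q := by
    rintro q (⟨hq, -⟩ | ⟨hq, -⟩) <;> exact hq.1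
  have himage : invSet (u * π) = Θ '' (invSet u ∆ invSet π) := by
    ext p
    constructor
    · intro hp
      have hp' : IsTypeBPair p := hp.1
      exact ⟨Θ p, (hmem p hp').1 hp, hΘΘ p hp'⟩
    · rintro ⟨q, hq, rfl⟩
      exact (hmem _ (hΘpair q (hpair q hq))).2 (by rwa [hΘΘ q (hpair q hq)])
  have hinj : Set.InjOn Θ (invSet u ∆ invSet π) := fun p hp q hq hpq => by
    rw [← hΘΘ p (hpair p hp), ← hΘΘ q (hpair q hq), hpq]
  rw [ninv, himage, hinj.ncard_image]
  exact ncard_symmDiff_add_two_mul_ncard_inter hu.invSet_finite hπ.invSet_finite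

def flipSign (u : Perm ℤ) (p : ℤ × ℤ) : ℤ := if u p.2 < u p.1 then -1 else 1

lemma flipSign_mk (u : Perm ℤ) (x y : ℤ) : flipSign u (x, y) = if u y < u x then -1 else 1 := rfl

theorem ninv_mul_eq_add_sum {u π : Perm ℤ} (hu : InWinf u) (hπ : InWinf π)
    (hπ2 : Function.Involutive π) {D : Finset (ℤ × ℤ)} (hD : invSet π = D) :
    (ninv (u * π) : ℤ) = ninv u + ∑ p ∈ D, flipSign u p := by
  have h := ninv_mul_add_two_mul_ncard_inter hu hπ hπ2
  have hinter : invSet u ∩ invSet π = ↑(D.filter fun p => u p.2 < u p.1) := by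
    ext p
    have hp : p ∈ invSet π ↔ p ∈ D := by rw [hD, Finset.mem_coe]
    rw [Set.mem_inter_iff, Finset.coe_filter, Set.mem_ofPred_eq, hp]
    exact ⟨fun h => ⟨h.2, h.1.2⟩, fun h => ⟨⟨(hp.2 h.1).1, h.2⟩, h.1⟩⟩
  have hπD : ninv π = D.card := by rw [ninv, hD, Set.ncard_coe_finset]
  have hcard := Finset.card_filter_add_card_filter_not (s := D) (fun p => u p.2 < u p.1)
  rw [hinter, Set.ncard_coe_finset, hπD] at h
  simp only [flipSign, Finset.sum_ite, Finset.sum_const, nsmul_eq_mul, mul_neg, mul_one]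
  omega

lemma inWinf_wS (p : ℕ) : InWinf (wS p) := by
  refine ⟨fun x => ?_, p + 1, fun x hx => ?_⟩
  on_goal 2 => rw [lt_abs] at hx; push_cast at hx
  all_goals
    unfold wS
    split_ifs <;> simp only [Perm.mul_apply, swap_apply_def] <;> split_ifs <;> omega

lemma involutive_wS (p : ℕ) : Function.Involutive (wS p) := by
  intro x
  rcases eq_or_ne p 0 with rfl | hp
  · simp only [wS, reduceIte, swap_apply_self]
  · simp only [wS, hp, reduceIte, Perm.mul_apply, swap_apply_def]
    split_ifs <;> omega

lemma invSet_wS_zero : invSet (wS 0) = {(-1, 1)} := by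
  ext ⟨x, y⟩
  simp only [invSet, IsTypeBPair, wS, reduceIte, swap_apply_def, Set.mem_ofPred_eq,
    Set.mem_singleton_iff, Prod.mk.injEq]
  split_ifs <;> omega

lemma invSet_wS_of_ne_zero {p : ℕ} (hp : p ≠ 0) : invSet (wS p) = {((p : ℤ), (p : ℤ) + 1)} := by
  ext ⟨x, y⟩
  simp only [invSet, IsTypeBPair, wS, hp, reduceIte, Perm.mul_apply, swap_apply_def,
    Set.mem_ofPred_eq, Set.mem_singleton_iff, Prod.mk.injEq]
  split_ifs <;> omega

lemma IsOddPerm.descent_iff {f : Perm ℤ} (hf : IsOddPerm f) (p : ℕ) :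
    Descent f p ↔ f ((p : ℤ) + 1) < f p := by
  unfold Descent
  split_ifs with hp
  · rw [hp, Nat.cast_zero, hf.map_zero]
  · rfl

lemma InWinf.ninv_mul_wS {u : Perm ℤ} (hu : InWinf u) (p : ℕ) :
    (ninv (u * wS p) : ℤ) = ninv u + if Descent u p then -1 else 1 := by
  rw [hu.1.descent_iff]
  rcases eq_or_ne p 0 with rfl | hp
  · rw [ninv_mul_eq_add_sum hu (inWinf_wS 0) (involutive_wS 0) (D := {(-1, 1)})
      (by rw [invSet_wS_zero, Finset.coe_singleton]), Finset.sum_singleton]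
    have h1 := hu.1 1
    have h0 := hu.1.map_zero
    simp only [flipSign, Nat.cast_zero, zero_add]
    split_ifs <;> omega
  · rw [ninv_mul_eq_add_sum hu (inWinf_wS p) (involutive_wS p) (D := {((p : ℤ), (p : ℤ) + 1)})
      (by rw [invSet_wS_of_ne_zero hp, Finset.coe_singleton]), Finset.sum_singleton]
    simp only [flipSign]
    split_ifs <;> rfl

lemma ninv_one : ninv 1 = 0 := by
  suffices invSet 1 = ∅ by rw [ninv, this, Set.ncard_empty]
  ext ⟨x, y⟩
  simp only [invSet, IsTypeBPair, Perm.one_apply, Set.mem_ofPred_eq, Set.mem_empty_iff_false,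
    iff_false]
  omega

lemma inWinf_prod_map_wS (l : List ℕ) : InWinf (l.map wS).prod :=
  List.prod_induction _ (fun _ _ => InWinf.mul) ⟨fun _ => rfl, 0, fun _ _ => rfl⟩
    (by simpa using fun p _ => inWinf_wS p)

lemma ninv_prod_map_wS_le (l : List ℕ) : ninv (l.map wS).prod ≤ l.length := by
  induction l using List.reverseRecOn with
  | nil => simp [ninv_one]
  | append_singleton l p ih =>
    have h := (inWinf_prod_map_wS l).ninv_mul_wS p
    simp only [List.map_append, List.map_singleton, List.prod_append, List.prod_singleton,
      List.length_append, List.length_singleton]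
    split_ifs at h <;> omega

lemma InWinf.eq_one_of_forall_not_descent {f : Perm ℤ} (hf : InWinf f)
    (h : ∀ p, ¬ Descent f p) : f = 1 := by
  obtain ⟨hfo, n, hn⟩ := hf
  have hmono : Monotone fun m : ℕ => f m - m := monotone_nat_of_le_succ fun m => by
    have h1 := (hfo.descent_iff m).not.1 (h m)
    have h2 : f ((m : ℤ) + 1) ≠ f m := f.injective.ne (by omega)
    push_cast
    omega
  have hnat : ∀ m : ℕ, f m = m := by
    intro m
    have h1 := hmono (Nat.zero_le m)
    have h2 := hmono (le_max_left m (n + 1))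
    have h3 := hn (max m (n + 1) : ℕ) (by rw [abs_of_nonneg (by positivity)]; push_cast; omega)
    simp only [Nat.cast_zero, hfo.map_zero] at h1 h2
    omega
  ext x
  rcases le_or_gt 0 x with hx | hx
  · lift x to ℕ using hx
    exact hnat x
  · have := hfo (-x)
    rw [neg_neg] at this
    have h2 := hnat (-x).toNat
    rw [Int.toNat_of_nonneg (by omega)] at h2
    simp only [Perm.one_apply]
    omega

lemma InWinf.exists_word {f : Perm ℤ} (hf : InWinf f) :
    ∃ l : List ℕ, l.length = ninv f ∧ (l.map wS).prod = f := by
  induction hN : ninv f using Nat.strong_induction_on generalizing f with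
  | _ N ih =>
    by_cases hd : ∃ p, Descent f p
    · obtain ⟨p, hp⟩ := hd
      have hstep := hf.ninv_mul_wS p
      rw [if_pos hp] at hstep
      obtain ⟨l, hl, hprod⟩ := ih _ (by omega) (hf.mul (inWinf_wS p)) rfl
      refine ⟨l ++ [p], by simp only [List.length_append, List.length_singleton]; omega, ?_⟩
      rw [List.map_append, List.prod_append, hprod, List.map_singleton, List.prod_singleton,
        mul_assoc, show wS p * wS p = 1 from Equiv.ext (involutive_wS p), mul_one]
    · rw [hf.eq_one_of_forall_not_descent (not_exists.1 hd)] at hN ⊢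
      exact ⟨[], by simp [← hN, ninv_one], rfl⟩

theorem InWinf.len_eq_ninv {f : Perm ℤ} (hf : InWinf f) : len f = ninv f := by
  obtain ⟨l, hl, hprod⟩ := hf.exists_word
  refine le_antisymm (Nat.sInf_le ⟨l, hl, hprod⟩) ?_
  obtain ⟨l', hl', hprod'⟩ := Nat.sInf_mem (⟨_, l, hl, hprod⟩ :
    {m : ℕ | ∃ l : List ℕ, l.length = m ∧ (l.map wS).prod = f}.Nonempty)
  rw [len, ← hl', ← hprod']
  exact ninv_prod_map_wS_le l'

section Reflections

variable {a b : ℕ}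

lemma inWinf_tt (ha : 0 < a) (hb : 0 < b) : InWinf (tt a b) := by
  refine ⟨fun x => ?_, max a b, fun x hx => ?_⟩
  on_goal 2 => rw [lt_abs] at hx; push_cast at hx
  all_goals
    simp only [tt, Perm.mul_apply, swap_apply_def]
    split_ifs <;> omega

lemma involutive_tt (ha : 0 < a) (hb : 0 < b) : Function.Involutive (tt a b) := by
  intro x
  simp only [tt, Perm.mul_apply, swap_apply_def]
  split_ifs <;> omega

lemma tt_apply_natCast_of_ne {m : ℕ} (hma : m ≠ a) (hmb : m ≠ b) : tt a b m = m := by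
  simp only [tt, Perm.mul_apply, swap_apply_def]
  split_ifs <;> omega

lemma tt_apply_left (ha : 0 < a) : tt a b a = b := by
  simp only [tt, Perm.mul_apply, swap_apply_def]
  split_ifs <;> omega

lemma inWinf_tb (ha : 0 < a) (hb : 0 < b) : InWinf (tb a b) := by
  refine ⟨fun x => ?_, max a b, fun x hx => ?_⟩
  on_goal 2 => rw [lt_abs] at hx; push_cast at hx
  all_goals
    unfold tb
    split_ifs <;> simp only [Perm.mul_apply, swap_apply_def] <;> split_ifs <;> omega

lemma involutive_tb (ha : 0 < a) (hb : 0 < b) : Function.Involutive (tb a b) := by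
  intro x
  unfold tb
  split_ifs <;> simp only [Perm.mul_apply, swap_apply_def] <;> split_ifs <;> omega

lemma tb_apply_natCast_of_ne {m : ℕ} (hma : m ≠ a) (hmb : m ≠ b) : tb a b m = m := by
  unfold tb
  split_ifs <;> simp only [Perm.mul_apply, swap_apply_def] <;> split_ifs <;> omega

lemma tb_apply_left (ha : 0 < a) : tb a b a = -b := by
  unfold tb
  split_ifs <;> simp only [Perm.mul_apply, swap_apply_def] <;> split_ifs <;> omega

end Reflections

theorem InWinf.ninv_mul_tt {u : Perm ℤ} (hu : InWinf u) {a b : ℕ} (ha : 0 < a) (hab : a < b) :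
    (ninv (u * tt a b) : ℤ) = ninv u + flipSign u (a, b) +
      ∑ j ∈ Finset.Ioo (a : ℤ) b, (flipSign u (a, j) + flipSign u (j, b)) := by
  set I := Finset.Ioo (a : ℤ) b
  have hD : invSet (tt a b) = ↑(insert ((a : ℤ), (b : ℤ)) ({(a : ℤ)} ×ˢ I ∪ I ×ˢ {(b : ℤ)})) := by
    ext ⟨x, y⟩
    simp only [invSet, IsTypeBPair, tt, Perm.mul_apply, swap_apply_def, Set.mem_ofPred_eq,
      Finset.coe_insert, Set.mem_insert_iff, Finset.coe_union, Set.mem_union, Finset.mem_coe,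
      Finset.mem_product, Finset.mem_singleton, I, Finset.mem_Ioo, Prod.mk.injEq]
    split_ifs <;> omega
  rw [ninv_mul_eq_add_sum hu (inWinf_tt ha (by omega)) (involutive_tt ha (by omega)) hD,
    Finset.sum_insert, Finset.sum_union, Finset.sum_product, Finset.sum_product_right,
    Finset.sum_singleton, Finset.sum_add_distrib]
  · simp only [Finset.sum_singleton, add_assoc]
  all_goals
    try rw [Finset.disjoint_left]; rintro ⟨x, y⟩
    simp only [I, Finset.mem_union, Finset.mem_product, Finset.mem_singleton, Finset.mem_Ioo]
    omega

theorem InWinf.ninv_mul_tb {u : Perm ℤ} (hu : InWinf u) {a b : ℕ} (ha : 0 < a) (hab : a < b) :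
    (ninv (u * tb a b) : ℤ) = ninv u +
      (flipSign u (-a, a) + flipSign u (-a, b) + flipSign u (-b, b)) +
      ∑ m ∈ Finset.Ioo (0 : ℤ) a,
        (flipSign u (m, a) + flipSign u (m, b) + (flipSign u (-m, a) + flipSign u (-m, b))) +
      ∑ j ∈ Finset.Ioo (a : ℤ) b, (flipSign u (-a, j) + flipSign u (j, b)) := by
  set A : ℤ := (a : ℤ)
  set B : ℤ := (b : ℤ)
  set I := Finset.Ioo (0 : ℤ) A
  set J := Finset.Ioo A B
  have hD : invSet (tb a b) = ↑(({(-A, A), (-A, B), (-B, B)} : Finset (ℤ × ℤ)) ∪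
      (I ×ˢ {A, B} ∪ (I.map (Equiv.neg ℤ).toEmbedding ×ˢ {A, B} ∪
        ({-A} ×ˢ J ∪ J ×ˢ {B})))) := by
    ext ⟨x, y⟩
    simp only [invSet, IsTypeBPair, tb, hab.ne, ↓reduceIte, Perm.mul_apply, swap_apply_def,
      Set.mem_ofPred_eq, Finset.coe_union, Set.mem_union, Finset.mem_coe, Finset.mem_insert,
      Finset.mem_product, Finset.mem_singleton, Finset.mem_map_equiv, Equiv.neg_symm,
      Equiv.neg_apply, I, J, Finset.mem_Ioo, Prod.mk.injEq]
    split_ifs <;> omega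
  rw [ninv_mul_eq_add_sum hu (inWinf_tb ha (by omega)) (involutive_tb ha (by omega)) hD,
    Finset.sum_union, Finset.sum_union, Finset.sum_union, Finset.sum_union, Finset.sum_insert,
    Finset.sum_pair, Finset.sum_product, Finset.sum_product, Finset.sum_map, Finset.sum_product,
    Finset.sum_product_right, Finset.sum_singleton, Finset.sum_add_distrib]
  · simp only [Finset.sum_pair (show A ≠ B by omega), Finset.sum_singleton,
      Equiv.coe_toEmbedding, Equiv.neg_apply, Finset.sum_add_distrib]
    ring
  all_goals
    try rw [Finset.disjoint_left]; rintro ⟨x, y⟩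
    simp only [I, J, Finset.mem_union, Finset.mem_insert, Finset.mem_product,
      Finset.mem_singleton, Finset.mem_map_equiv, Equiv.neg_symm, Equiv.neg_apply, Finset.mem_Ioo,
      ne_eq, Prod.mk.injEq]
    omega

lemma IsOddPerm.lt_of_not_descent {f : Perm ℤ} (hf : IsOddPerm f) {p : ℕ} (h : ¬ Descent f p) :
    f p < f ((p : ℤ) + 1) := by
  have h1 := (hf.descent_iff p).not.1 h
  have h2 : f p ≠ f ((p : ℤ) + 1) := f.injective.ne (by omega)
  omega

lemma incUpTo_iff {k : ℕ} {f : Perm ℤ} (hf : IsOddPerm f) :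
    IncUpTo k f ↔ ∀ p : ℕ, p < k → f p < f ((p : ℤ) + 1) :=
  ⟨fun h p hp => hf.lt_of_not_descent (h p hp),
    fun h p hp => (hf.descent_iff p).not.2 (h p hp).le.not_gt⟩

lemma IncUpTo.mono {k l : ℕ} {f : Perm ℤ} (h : IncUpTo k f) (hlk : l ≤ k) : IncUpTo l f :=
  fun p hp => h p (by omega)

lemma IncUpTo.congr {k : ℕ} {u v : Perm ℤ} (h : IncUpTo k u)
    (heq : ∀ m : ℕ, m ≤ k → v m = u m) : IncUpTo k v := by
  intro p hp hd
  apply h p hp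
  have hsucc := heq (p + 1) hp
  push_cast at hsucc
  unfold Descent at hd ⊢
  rw [hsucc, heq p hp.le] at hd
  exact hd

lemma IsOddPerm.lt_of_forall_not_descent {f : Perm ℤ} (hf : IsOddPerm f) {r : ℕ}
    (h : ∀ p : ℕ, r < p → ¬ Descent f p) {i j : ℕ} (hri : r < i) (hij : i < j) : f i < f j := by
  induction j, hij using Nat.le_induction with
  | base => exact_mod_cast hf.lt_of_not_descent (h i hri)
  | succ j hij ih => exact_mod_cast ih.trans (hf.lt_of_not_descent (h j (by omega)))

lemma IncUpTo.apply_lt_apply {k : ℕ} {f : Perm ℤ} (hf : IsOddPerm f) (h : IncUpTo k f)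
    {m m' : ℤ} (hm : 0 ≤ m) (hmm' : m < m') (hm' : m' ≤ k) : f m < f m' := by
  lift m to ℕ using hm
  lift m' to ℕ using (by omega)
  have hstep := (incUpTo_iff hf).1 h
  induction m', (show m + 1 ≤ m' by omega) using Nat.le_induction with
  | base => exact_mod_cast hstep m (by omega)
  | succ j hj ih => exact_mod_cast (ih (by omega) (by omega)).trans (hstep j (by omega))

lemma IncUpTo.apply_pos {k : ℕ} {f : Perm ℤ} (hf : IsOddPerm f) (h : IncUpTo k f) {m : ℤ}
    (hm : 0 < m) (hmk : m ≤ k) : 0 < f m := by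
  simpa only [hf.map_zero] using h.apply_lt_apply hf le_rfl hm hmk

section Covers

variable {u : Perm ℤ} {a b : ℕ}

lemma InWinf.ninv_mul_tt_add_one (hu : InWinf u) (ha : 0 < a) (hab : a < b)
    (hba : u b < u a) (hgap : ∀ j : ℤ, a < j → j < b → u j < u b ∨ u a < u j) :
    ninv (u * tt a b) + 1 = ninv u := by
  have hsum : ∑ j ∈ Finset.Ioo (a : ℤ) b, (flipSign u (a, j) + flipSign u (j, b)) = 0 :=
    Finset.sum_eq_zero fun j hj => by
      rw [Finset.mem_Ioo] at hj
      have := hgap j hj.1 hj.2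
      simp only [flipSign_mk]
      split_ifs <;> omega
  have h := hu.ninv_mul_tt ha hab
  rw [hsum, flipSign_mk, if_pos hba] at h
  omega

lemma InWinf.lt_of_ninv_mul_tt_eq_add_one (hu : InWinf u) (ha : 0 < a) (hab : a < b)
    (hlen : ninv (u * tt a b) = ninv u + 1) :
    u a < u b ∧ ∀ j : ℤ, a < j → j < b → u a < u j → u b < u j := by
  have h := hu.ninv_mul_tt ha hab
  rw [hlen] at h
  have hab' : u a ≠ u b := u.injective.ne (by omega)
  have hlt : u a < u b := by
    by_contra hba
    have hsum : ∑ j ∈ Finset.Ioo (a : ℤ) b, (flipSign u (a, j) + flipSign u (j, b)) ≤ 0 :=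
      Finset.sum_nonpos fun j _ => by simp only [flipSign_mk]; split_ifs <;> omega
    rw [flipSign_mk, if_pos (by omega)] at h
    omega
  refine ⟨hlt, fun j haj hjb hj => ?_⟩
  by_contra hbj
  have hjb' : u j ≠ u b := u.injective.ne (by omega)
  have hsum : 2 ≤ ∑ j ∈ Finset.Ioo (a : ℤ) b, (flipSign u (a, j) + flipSign u (j, b)) := by
    refine le_trans ?_ (Finset.single_le_sum (fun j _ => ?_) (Finset.mem_Ioo.2 ⟨haj, hjb⟩))
    · simp only [flipSign_mk]; split_ifs <;> omega
    · simp only [flipSign_mk]; split_ifs <;> omega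
  rw [flipSign_mk, if_neg (by omega)] at h
  omega

theorem InWinf.ninv_mul_tb_of_incUpTo (hu : InWinf u) (ha : 0 < a) (hab : a < b)
    (hinc : IncUpTo a u) :
    (ninv (u * tb a b) : ℤ) = ninv u + 1 + (flipSign u (-a, b) + flipSign u (-b, b)) +
      ∑ m ∈ Finset.Ioo (0 : ℤ) a, (2 + (flipSign u (m, b) + flipSign u (-m, b))) +
      ∑ j ∈ Finset.Ioo (a : ℤ) b, (flipSign u (-a, j) + flipSign u (j, b)) := by
  have hua := hinc.apply_pos hu.1 (by omega : (0 : ℤ) < a) le_rfl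
  have haa : flipSign u (-a, a) = 1 := by rw [flipSign_mk, hu.1, if_neg (by omega)]
  have hsmall : ∀ m ∈ Finset.Ioo (0 : ℤ) a,
      flipSign u (m, a) + flipSign u (m, b) + (flipSign u (-m, a) + flipSign u (-m, b)) =
        2 + (flipSign u (m, b) + flipSign u (-m, b)) := by
    intro m hm
    rw [Finset.mem_Ioo] at hm
    have := hinc.apply_lt_apply hu.1 hm.1.le hm.2 le_rfl
    have := hinc.apply_pos hu.1 hm.1 hm.2.le
    simp only [flipSign_mk, hu.1 m]
    split_ifs <;> omega
  rw [hu.ninv_mul_tb ha hab, Finset.sum_congr rfl hsmall, haa]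
  ring

lemma InWinf.apply_sub_one_lt_neg_of_ninv_mul_tb_eq_add_one (hu : InWinf u) (ha : 0 < a)
    (hab : a < b) (hinc : IncUpTo a u) (hlen : ninv (u * tb a b) = ninv u + 1) :
    u ((a : ℤ) - 1) < -u b := by
  have h := hu.ninv_mul_tb_of_incUpTo ha hab hinc
  rw [hlen] at h
  by_contra hc
  have hne : u ((a : ℤ) - 1) ≠ -u b := by rw [← hu.1]; exact u.injective.ne (by omega)
  have hca := hinc.apply_lt_apply hu.1 (m := (a : ℤ) - 1) (by omega) (by omega) le_rfl
  have hab' : flipSign u (-a, b) = 1 := by rw [flipSign_mk, hu.1, if_neg (by omega)]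
  have hJ : 0 ≤ ∑ j ∈ Finset.Ioo (a : ℤ) b, (flipSign u (-a, j) + flipSign u (j, b)) :=
    Finset.sum_nonneg fun j _ => by simp only [flipSign_mk, hu.1 a]; split_ifs <;> omega
  have hT : ∀ m ∈ Finset.Ioo (0 : ℤ) a, 0 ≤ 2 + (flipSign u (m, b) + flipSign u (-m, b)) :=
    fun m _ => by simp only [flipSign_mk]; split_ifs <;> omega
  rcases eq_or_ne a 1 with rfl | ha1
  · have hb : 0 < u b := by
      simp only [Nat.cast_one, sub_self, hu.1.map_zero] at hne hc
      omega
    have hbb : flipSign u (-b, b) = 1 := by rw [flipSign_mk, hu.1, if_neg (by omega)]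
    have := Finset.sum_nonneg hT
    omega
  · have hmem : (a : ℤ) - 1 ∈ Finset.Ioo (0 : ℤ) a := Finset.mem_Ioo.2 ⟨by omega, by omega⟩
    have hTa : 2 ≤ 2 + (flipSign u ((a : ℤ) - 1, b) + flipSign u (-((a : ℤ) - 1), b)) := by
      simp only [flipSign_mk, hu.1 ((a : ℤ) - 1)]
      split_ifs <;> omega
    have := Finset.single_le_sum hT hmem
    have hbb : -1 ≤ flipSign u (-b, b) := by simp only [flipSign_mk]; split_ifs <;> omega
    omega

lemma InWinf.neg_lt_of_ninv_mul_tb_eq_add_one (hu : InWinf u) (ha : 0 < a) (hab : a < b)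
    (hinc : IncUpTo a u) (hlen : ninv (u * tb a b) = ninv u + 1) {j : ℤ} (haj : a < j)
    (hj : u a < u j) : -u b < u j := by
  have h := hu.ninv_mul_tb_of_incUpTo ha hab hinc
  rw [hlen] at h
  by_contra hc
  have hne : u j ≠ -u b := by rw [← hu.1]; exact u.injective.ne (by omega)
  have hua := hinc.apply_pos hu.1 (by omega : (0 : ℤ) < a) le_rfl
  have hab' : flipSign u (-a, b) = -1 := by rw [flipSign_mk, hu.1, if_pos (by omega)]
  have hbb : flipSign u (-b, b) = -1 := by rw [flipSign_mk, hu.1, if_pos (by omega)]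
  have hJ : ∑ i ∈ Finset.Ioo (a : ℤ) b, (flipSign u (-a, i) + flipSign u (i, b)) ≤ 0 :=
    Finset.sum_nonpos fun i _ => by simp only [flipSign_mk, hu.1 a]; split_ifs <;> omega
  have hT : ∑ m ∈ Finset.Ioo (0 : ℤ) a, (2 + (flipSign u (m, b) + flipSign u (-m, b))) = 0 :=
    Finset.sum_eq_zero fun m hm => by
      rw [Finset.mem_Ioo] at hm
      have := hinc.apply_lt_apply hu.1 hm.1.le hm.2 le_rfl
      have := hinc.apply_pos hu.1 hm.1 hm.2.le
      simp only [flipSign_mk, hu.1 m]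
      split_ifs <;> omega
  omega

end Covers

section IncreasingUpTo

variable {k i r : ℕ} {u : Perm ℤ}

lemma IncUpTo.of_update {v : Perm ℤ} (hu : IsOddPerm u) (hv : IsOddPerm v) (h : IncUpTo k u)
    (hik : i ≤ k) (heq : ∀ m : ℕ, m ≤ k → m ≠ i → v m = u m)
    (hlow : u ((i : ℤ) - 1) < v i) (hhigh : i < k → v i < u ((i : ℤ) + 1)) : IncUpTo k v := by
  rw [incUpTo_iff hu] at h
  rw [incUpTo_iff hv]
  intro p hp
  have hsucc : v ((p : ℤ) + 1) = u ((p : ℤ) + 1) ∨ p + 1 = i := by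
    rcases eq_or_ne (p + 1) i with hpi | hpi
    · exact Or.inr hpi
    · exact Or.inl (by exact_mod_cast heq (p + 1) hp hpi)
  rcases eq_or_ne p i with rfl | hpi
  · rcases hsucc with hsucc | hsucc
    · rw [hsucc]; exact hhigh hp
    · omega
  · rw [heq p hp.le hpi]
    rcases hsucc with hsucc | rfl
    · rw [hsucc]; exact h p hp
    · push_cast at hlow ⊢
      simpa using hlow

lemma IncUpTo.mul_tt (hu : InWinf u) (h : IncUpTo k u) (hi : 0 < i) (hir : i < r) (hkr : k < r)
    (hlen : ninv (u * tt i r) = ninv u + 1) : IncUpTo k (u * tt i r) := by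
  have hfix : ∀ m : ℕ, m ≤ k → m ≠ i → (u * tt i r) m = u m := fun m hm hmi => by
    rw [Perm.mul_apply, tt_apply_natCast_of_ne hmi (by omega)]
  by_cases hik : i ≤ k
  · obtain ⟨hir', hgap⟩ := hu.lt_of_ninv_mul_tt_eq_add_one hi hir hlen
    have hvi : (u * tt i r) i = u r := by rw [Perm.mul_apply, tt_apply_left hi]
    refine h.of_update hu.1 (hu.mul (inWinf_tt hi (by omega))).1 hik hfix ?_ fun hik' => ?_
    · rw [hvi]
      exact (h.apply_lt_apply hu.1 (by omega) (by omega) (by omega)).trans hir'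
    · rw [hvi]
      exact hgap _ (by omega) (by omega) (h.apply_lt_apply hu.1 (by omega) (by omega) (by omega))
  · exact h.congr fun m hm => hfix m hm (by omega)

lemma IncUpTo.mul_tb (hu : InWinf u) (h : IncUpTo k u) (hi : 0 < i) (hkr : k < r)
    (hlen : ninv (u * tb i r) = ninv u + 1) : IncUpTo k (u * tb i r) := by
  have hfix : ∀ m : ℕ, m ≤ k → m ≠ i → (u * tb i r) m = u m := fun m hm hmi => by
    rw [Perm.mul_apply, tb_apply_natCast_of_ne hmi (by omega)]
  by_cases hik : i ≤ k
  · have hvi : (u * tb i r) i = -u r := by rw [Perm.mul_apply, tb_apply_left hi, hu.1]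
    refine h.of_update hu.1 (hu.mul (inWinf_tb hi (by omega))).1 hik hfix ?_ fun hik' => ?_
    · rw [hvi]
      exact hu.apply_sub_one_lt_neg_of_ninv_mul_tb_eq_add_one hi (by omega) (h.mono hik) hlen
    · rw [hvi]
      exact hu.neg_lt_of_ninv_mul_tb_eq_add_one hi (by omega) (h.mono hik) hlen (by omega)
        (h.apply_lt_apply hu.1 (by omega) (by omega) (by omega))
  · exact h.congr fun m hm => hfix m hm (by omega)

end IncreasingUpTo

theorem transition_set_increasing_general (k : ℕ) (w : Equiv.Perm ℤ) (hW : InWinf w)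
    (hinc : IncUpTo k w) (r s : ℕ)
    (hrlast : ∀ p : ℕ, r < p → ¬ Descent w p) (hrk : k < r)
    (hs1 : r < s) (hs2 : w (s : ℤ) < w (r : ℤ)) :
    ∀ v ∈ Phi w r s, IncUpTo k v := by
  set u := w * tt r s
  have hu : InWinf u := hW.mul (inWinf_tt (by omega) (by omega))
  have hlen_u : ninv u + 1 = ninv w := hW.ninv_mul_tt_add_one (by omega) hs1 hs2 fun j hrj hjs => by
    lift j to ℕ using (by omega)
    exact Or.inl (hW.1.lt_of_forall_not_descent hrlast (by omega) (by omega))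
  have hinc_u : IncUpTo k u := hinc.congr fun m hm => by
    rw [Perm.mul_apply, tt_apply_natCast_of_ne (by omega) (by omega)]
  have hlen : ∀ v, InWinf v → len v = len w → ninv v = ninv u + 1 := fun v hv hvw => by
    rw [hv.len_eq_ninv, hW.len_eq_ninv] at hvw
    omega
  rintro v (⟨i, hi, hir, hvw, rfl⟩ | ⟨i, hi, hvw, rfl⟩)
  · exact hinc_u.mul_tt hu hi hir hrk (hlen _ (hu.mul (inWinf_tt hi (by omega))) hvw)
  · exact hinc_u.mul_tb hu hi hrk (hlen _ (hu.mul (inWinf_tb hi (by omega))) hvw)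

theorem transition_set_increasing (k : ℕ) (w : Equiv.Perm ℤ) (hW : InWinf w)
    (hinc : IncUpTo k w) (hng : ¬ kGrass k w) (r s : ℕ)
    (hrd : Descent w r) (hrlast : ∀ p : ℕ, r < p → ¬ Descent w p) (hrk : k < r)
    (hs1 : r < s) (hs2 : w (s : ℤ) < w (r : ℤ))
    (hs3 : ∀ j : ℕ, s < j → ¬ (w (j : ℤ) < w (r : ℤ))) :
    ∀ v ∈ Phi w r s, IncUpTo k v :=
  transition_set_increasing_general k w hW hinc r s hrlast hrk hs1 hs2

end Giambelli
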